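/- Let f be a ratio-balanced maximum flow, assume A is nonempty, let R = max_{j∈A} r_j^f and assume R > 0. Let A' = {j ∈ A : r_j^f = R} and S' = {i ∈ S : f_{ij} > 0 for some j ∈ A'}. Then every security i ∈ S with v_i > 0 that has an edge (i,j) ∈ E to some account j ∈ A' belongs to S'; in particular, no security outside S' with positive value has an edge into A'. -/

import Mathlib

/-!
A maximum flow saturates an endpoint of every edge. An account `j` with risk ratio `R > 0`
is not saturated, so a security `i` with an edge to `j` is: it sends its whole positive value,
hence positive flow to some `l`. The ratio constraint gives `r_l ≥ r_j = R`, and `R` is maximal.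
-/

open Finset
open scoped Classical

variable {S A : Type*} [Fintype S] [Fintype A]

/-- A feasible flow: nonnegative on edges, zero off edges, outflow of each security
bounded by its value, inflow of each account bounded by its exposure. -/
def Feasible (E : Finset (S × A)) (v : S → ℝ) (e : A → ℝ) (f : S → A → ℝ) : Prop :=
  (∀ i j, (i, j) ∈ E → 0 ≤ f i j) ∧
  (∀ i j, (i, j) ∉ E → f i j = 0) ∧
  (∀ i : S, ∑ j ∈ Finset.univ.filter (fun j => (i, j) ∈ E), f i j ≤ v i) ∧
  (∀ j : A, ∑ i ∈ Finset.univ.filter (fun i => (i, j) ∈ E), f i j ≤ e j)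

/-- The value of a flow: total flow on all edges. -/
noncomputable def flowValue (E : Finset (S × A)) (f : S → A → ℝ) : ℝ :=
  ∑ p ∈ E, f p.1 p.2

/-- The risk ratio of account `j` under a flow `f`. -/
noncomputable def riskRatio (E : Finset (S × A)) (e : A → ℝ) (f : S → A → ℝ) (j : A) : ℝ :=
  (e j - ∑ i ∈ Finset.univ.filter (fun i => (i, j) ∈ E), f i j) / e j

/-- A maximum flow: feasible, with value maximal among feasible flows. -/
def IsMaxFlow (E : Finset (S × A)) (v : S → ℝ) (e : A → ℝ) (f : S → A → ℝ) : Prop :=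
  Feasible E v e f ∧ ∀ g : S → A → ℝ, Feasible E v e g → flowValue E g ≤ flowValue E f

/-- The ratio constraint: if `f` sends positive flow from `i` to `j` and `i` could
also be used for `l`, then the risk ratio of `j` is at least that of `l`. -/
def RatioConstraint (E : Finset (S × A)) (e : A → ℝ) (f : S → A → ℝ) : Prop :=
  ∀ i j l, (i, j) ∈ E → 0 < f i j → (i, l) ∈ E →
    riskRatio E e f l ≤ riskRatio E e f j

/-- A ratio-balanced (maximum) flow. -/
def RatioBalanced (E : Finset (S × A)) (v : S → ℝ) (e : A → ℝ) (f : S → A → ℝ) : Prop :=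
  IsMaxFlow E v e f ∧ RatioConstraint E e f

/-- The weighted sum of squared risk ratios `∑ j, e j * (r_j^f)^2`. -/
noncomputable def objective (E : Finset (S × A)) (e : A → ℝ) (f : S → A → ℝ) : ℝ :=
  ∑ j : A, e j * (riskRatio E e f j) ^ 2

/-- An MWSR flow: a feasible flow minimizing the weighted sum of squared risk
ratios among all feasible flows. -/
def MWSR (E : Finset (S × A)) (v : S → ℝ) (e : A → ℝ) (f : S → A → ℝ) : Prop :=
  Feasible E v e f ∧ ∀ g : S → A → ℝ, Feasible E v e g → objective E e f ≤ objective E e g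


set_option linter.unusedSectionVars false

noncomputable def outflow (E : Finset (S × A)) (f : S → A → ℝ) (i : S) : ℝ :=
  ∑ j ∈ Finset.univ.filter (fun j => (i, j) ∈ E), f i j

noncomputable def inflow (E : Finset (S × A)) (f : S → A → ℝ) (j : A) : ℝ :=
  ∑ i ∈ Finset.univ.filter (fun i => (i, j) ∈ E), f i j

noncomputable def augment (f : S → A → ℝ) (i : S) (j : A) (ε : ℝ) : S → A → ℝ :=
  fun a b => f a b + if (a, b) = (i, j) then ε else 0

section Augment

variable {E : Finset (S × A)} {f : S → A → ℝ} {i : S} {j : A} {ε : ℝ}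

theorem outflow_augment (hij : (i, j) ∈ E) (a : S) :
    outflow E (augment f i j ε) a = outflow E f a + if a = i then ε else 0 := by
  unfold outflow augment
  rw [Finset.sum_add_distrib]
  congr 1
  by_cases ha : a = i
  · subst ha
    simp [hij]
  · simp [ha]

theorem inflow_augment (hij : (i, j) ∈ E) (b : A) :
    inflow E (augment f i j ε) b = inflow E f b + if b = j then ε else 0 := by
  unfold inflow augment
  rw [Finset.sum_add_distrib]
  congr 1
  by_cases hb : b = j
  · subst hb
    simp [hij]
  · simp [hb]

theorem flowValue_augment (hij : (i, j) ∈ E) :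
    flowValue E (augment f i j ε) = flowValue E f + ε := by
  simp only [flowValue, augment, Finset.sum_add_distrib, Prod.mk.eta, Finset.sum_ite_eq', hij,
    if_true]

theorem Feasible.augment {v : S → ℝ} {e : A → ℝ} (hf : Feasible E v e f) (hij : (i, j) ∈ E)
    (hε : 0 ≤ ε) (hi : outflow E f i + ε ≤ v i) (hj : inflow E f j + ε ≤ e j) :
    Feasible E v e (augment f i j ε) := by
  obtain ⟨hnn, hoff, hout, hin⟩ := hf
  refine ⟨fun a b hab => ?_, fun a b hab => ?_, fun a => ?_, fun b => ?_⟩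
  · have := hnn a b hab
    unfold _root_.augment
    split_ifs <;> linarith
  · have hne : (a, b) ≠ (i, j) := fun h => hab (h ▸ hij)
    simp [_root_.augment, hne, hoff a b hab]
  · change outflow E _ a ≤ v a
    rw [outflow_augment hij]
    split_ifs with ha
    · exact ha ▸ hi
    · rw [add_zero]
      exact hout a
  · change inflow E _ b ≤ e b
    rw [inflow_augment hij]
    split_ifs with hb
    · exact hb ▸ hj
    · rw [add_zero]
      exact hin b

end Augment

-- Otherwise the edge could be augmented.
theorem IsMaxFlow.outflow_eq_or_inflow_eq {E : Finset (S × A)} {v : S → ℝ} {e : A → ℝ}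
    {f : S → A → ℝ} (hf : IsMaxFlow E v e f) {i : S} {j : A} (hij : (i, j) ∈ E) :
    outflow E f i = v i ∨ inflow E f j = e j := by
  by_contra! h
  obtain ⟨hfeas, hmax⟩ := hf
  have hi : outflow E f i < v i := lt_of_le_of_ne (hfeas.2.2.1 i) h.1
  have hj : inflow E f j < e j := lt_of_le_of_ne (hfeas.2.2.2 j) h.2
  set ε := min (v i - outflow E f i) (e j - inflow E f j)
  have hεi : ε ≤ v i - outflow E f i := min_le_left _ _
  have hεj : ε ≤ e j - inflow E f j := min_le_right _ _
  have hε : 0 < ε := lt_min (by linarith) (by linarith)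
  have hfeas' : Feasible E v e (augment f i j ε) :=
    hfeas.augment hij hε.le (by linarith) (by linarith)
  have := hmax _ hfeas'
  rw [flowValue_augment hij] at this
  linarith

theorem inflow_lt_of_riskRatio_pos {E : Finset (S × A)} {e : A → ℝ} {f : S → A → ℝ} {j : A}
    (hej : 0 < e j) (hr : 0 < riskRatio E e f j) : inflow E f j < e j := by
  rw [riskRatio, div_pos_iff_of_pos_right hej] at hr
  exact sub_pos.mp hr

theorem exists_pos_of_outflow_pos {E : Finset (S × A)} {f : S → A → ℝ} {i : S}
    (h : 0 < outflow E f i) : ∃ j, (i, j) ∈ E ∧ 0 < f i j := by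
  obtain ⟨j, hj, hpos⟩ := Finset.exists_lt_of_sum_lt (f := fun _ => (0 : ℝ)) (g := f i)
    (s := Finset.univ.filter (fun j => (i, j) ∈ E)) (by rwa [Finset.sum_const_zero])
  exact ⟨j, (Finset.mem_filter.mp hj).2, hpos⟩

theorem edge_into_Aprime_mem_Sprime_general [Nonempty A] (E : Finset (S × A)) (v : S → ℝ) (e : A → ℝ)
    (he : ∀ j, 0 < e j)
    (f : S → A → ℝ) (hf : RatioBalanced E v e f)
    (R : ℝ) (hRdef : R = Finset.univ.sup' Finset.univ_nonempty (riskRatio E e f))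
    (hRpos : 0 < R) :
    ∀ i : S, 0 < v i → (∃ j : A, (i, j) ∈ E ∧ riskRatio E e f j = R) →
      ∃ j : A, (i, j) ∈ E ∧ riskRatio E e f j = R ∧ 0 < f i j := by
  rintro i hvi ⟨j, hij, hrj⟩
  obtain ⟨hmax, hrc⟩ := hf
  have hj_unsat : inflow E f j < e j := inflow_lt_of_riskRatio_pos (he j) (hrj ▸ hRpos)
  have hi_sat : outflow E f i = v i :=
    (hmax.outflow_eq_or_inflow_eq hij).resolve_right hj_unsat.ne
  obtain ⟨l, hil, hfl⟩ := exists_pos_of_outflow_pos (hi_sat ▸ hvi)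
  have hl_le : riskRatio E e f l ≤ R := hRdef ▸ Finset.le_sup' _ (Finset.mem_univ l)
  exact ⟨l, hil, le_antisymm hl_le (hrj ▸ hrc i l j hil hfl hij), hfl⟩

/-- every security with positive value having an edge into the set
`A'` of least-secured accounts sends positive flow to some account of `A'`. -/
theorem edge_into_Aprime_mem_Sprime [Nonempty A] (E : Finset (S × A)) (v : S → ℝ) (e : A → ℝ)
    (hv : ∀ i, 0 ≤ v i) (he : ∀ j, 0 < e j)
    (f : S → A → ℝ) (hf : RatioBalanced E v e f)
    (R : ℝ) (hRdef : R = Finset.univ.sup' Finset.univ_nonempty (riskRatio E e f))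
    (hRpos : 0 < R) :
    ∀ i : S, 0 < v i → (∃ j : A, (i, j) ∈ E ∧ riskRatio E e f j = R) →
      ∃ j : A, (i, j) ∈ E ∧ riskRatio E e f j = R ∧ 0 < f i j :=
  edge_into_Aprime_mem_Sprime_general E v e he f hf R hRdef hRpos
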